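/- arXiv:2410.22618 — 7 statements merged into one kernel-verified Lean document; each statement's English description precedes it below -/
import Mathlib

section
/- Augmentation property: let A be an augmented arena of D, let (t,x),(t,y) be temporal nodes and z ∈ Γ_t(x,D). If (t,y) is a shadow corner of (t+1,z) (i.e. y ≠ z and Γ_t(y,D) ⊆ Γ_{t+1}(z,A)), then the arena A' obtained from A by adding the edge ((t,x),(t+1,y)) is also an augmented arena of D. -/
/-- A strict journey in a temporal graph from `x` to `y` starting at time `t`. -/
inductive Journey {V : Type*} (E : ℕ → V → V → Prop) : ℕ → V → V → Prop where
  | refl (t : ℕ) (x : V) : Journey E t x x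
  | head : ∀ {t : ℕ} {x y z : V}, E t x y → Journey E (t + 1) y z → Journey E t x z

/-- Reachability in the arena: a journey starting at vertex `x` at round `0`
reaching vertex `u` at round `t`. -/
inductive ReachAt {V : Type*} (E : ℕ → V → V → Prop) (x : V) : ℕ → V → Prop where
  | zero : ReachAt E x 0 x
  | succ : ∀ {t : ℕ} {u v : V}, ReachAt E x t u → E t u v → ReachAt E x (t + 1) v

/-- Every vertex has an out-edge in every snapshot. -/
def Playable {V : Type*} (E : ℕ → V → V → Prop) : Prop :=
  ∀ (t : ℕ) (u : V), ∃ v : V, E t u v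

/-- The temporal graph is `p`-periodic. -/
def Periodic {V : Type*} (p : ℕ) (E : ℕ → V → V → Prop) : Prop :=
  ∀ (t : ℕ) (u v : V), E (t + p) u v ↔ E t u v

/-- The configuration `(t, c, r)` (cop at `c`, robber at `r`, round `t`,
cop to move first along an edge of `E t`) is winning for the cop. -/
inductive CopWin {V : Type*} (E : ℕ → V → V → Prop) : ℕ → V → V → Prop where
  | capture : ∀ {t : ℕ} {c r : V}, E t c r → CopWin E t c r
  | step : ∀ {t : ℕ} {c r : V} (c' : V), E t c c' →
      (∀ r' : V, E t r r' → CopWin E (t + 1) c' r') → CopWin E t c r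

/-- The arena is copwin: the cop has an initial position on slice `0` from which it
wins against every robber initial choice (robber starting on the cop counts as capture). -/
def CopwinArena {V : Type*} (E : ℕ → V → V → Prop) : Prop :=
  ∃ c₀ : V, ∀ r₀ : V, r₀ = c₀ ∨ CopWin E 0 c₀ r₀

/-- `A` is an augmented arena of the arena of `E`: it contains all arena edges, and all
its edges correspond to copwin configurations. -/
def IsAugArena {V : Type*} (E A : ℕ → V → V → Prop) : Prop :=
  (∀ (t : ℕ) (u v : V), E t u v → A t u v) ∧
  (∀ (t : ℕ) (u v : V), A t u v → CopWin E t u v)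

/-- `(t,u)` is a star of the arena `A`: it has out-edges to all vertices. -/
def IsStar {V : Type*} (A : ℕ → V → V → Prop) (t : ℕ) (u : V) : Prop :=
  ∀ v : V, A t u v

/-- `(t,u)` (a temporal node of the arena of a `p`-periodic graph) is anchored:
some journey in the arena starting from slice `0` reaches it. -/
def Anchored {V : Type*} (E : ℕ → V → V → Prop) (p t : ℕ) (u : V) : Prop :=
  ∃ (x : V) (T : ℕ), T % p = t % p ∧ ReachAt E x T u

/-- Augmentation property: adding to an augmented arena the edge `((t,x),(t+1,y))`,
where some `z ∈ Γ_t(x,D)` has `(t,y)` as a shadow corner of `(t+1,z)`,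
yields again an augmented arena. -/
theorem augmentation_property {V : Type*} [Fintype V]
    (p : ℕ) (hp : 0 < p) (E : ℕ → V → V → Prop)
    (hper : Periodic p E) (hplay : Playable E)
    (A : ℕ → V → V → Prop) (hA : IsAugArena E A)
    (t : ℕ) (x y z : V)
    (hz : E t x z) (hyz : y ≠ z)
    (hcorner : ∀ w : V, E t y w → A (t + 1) z w) :
    IsAugArena E (fun s u v => A s u v ∨ (s = t ∧ u = x ∧ v = y)) := by
  constructor
  · intro s u v h; exact Or.inl (hA.1 s u v h)
  · rintro s u v (h | ⟨rfl, rfl, rfl⟩)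
    · exact hA.2 s u v h
    · exact CopWin.step z hz (fun r' hr' => hA.2 _ _ _ (hcorner r' hr'))
end

section
/- Maximality property: an augmented arena A of D equals the maximum augmented arena A* if and only if for every non-edge ((t,x),(t+1,y)) ∉ E(A) there exists no z ∈ Γ_t(x,D) such that (t,y) is a shadow corner of (t+1,z) in A. -/
/-- Maximality property: an augmented arena `A` equals the maximum augmented arena `A*`
iff no non-edge of `A` is justified by a shadow corner. -/
theorem maximality_property {V : Type*} [Fintype V]
    (p : ℕ) (hp : 0 < p) (E : ℕ → V → V → Prop)
    (hper : Periodic p E) (hplay : Playable E)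
    (Astar : ℕ → V → V → Prop)
    (hAstar : IsAugArena E Astar)
    (hmax : ∀ A : ℕ → V → V → Prop, IsAugArena E A →
      ∀ (t : ℕ) (u v : V), A t u v → Astar t u v)
    (A : ℕ → V → V → Prop) (hA : IsAugArena E A) :
    (∀ (t : ℕ) (u v : V), A t u v ↔ Astar t u v) ↔
      (∀ (t : ℕ) (x y : V), ¬ A t x y →
        ¬ ∃ z : V, E t x z ∧ y ≠ z ∧ ∀ w : V, E t y w → A (t + 1) z w) := by
  constructor
  · rintro hAeq t x y hnA ⟨z, hxz, hyz, hzw⟩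
    have hcw : CopWin E t x y :=
      CopWin.step z hxz (fun r' hr' => hA.2 _ _ _ (hzw r' hr'))
    have hA' : IsAugArena E (fun t u v => A t u v ∨ CopWin E t u v) :=
      ⟨fun t u v h => Or.inl (hA.1 t u v h), fun t u v h => h.elim (hA.2 t u v) id⟩
    exact hnA ((hAeq t x y).mpr (hmax _ hA' t x y (Or.inr hcw)))
  · intro hcond t u v
    refine ⟨hmax A hA t u v, fun hst => ?_⟩
    have hcw := hAstar.2 t u v hst
    clear hst
    induction hcw with
    | capture h => exact hA.1 _ _ _ h
    | @step t c r c' hcc' hforall ih =>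
      by_contra hnA
      by_cases hc : r = c'
      · exact hnA (hA.1 _ _ _ (hc ▸ hcc'))
      · exact hcond t c r hnA ⟨c', hcc', hc, ih⟩
end

section
/- In a reflexive periodic temporal graph, if (t,u) is a star of some augmented arena A, then for every 0 ≤ j < p the temporal node (j,u) is a star of the maximum augmented arena A*: waiting on a vertex via self-loops preserves the cop-winning property at all times. -/
private lemma CopWin.shift {V : Type*} {p : ℕ} {E : ℕ → V → V → Prop}
    (hper : Periodic p E) :
    ∀ {t : ℕ} {c r : V}, CopWin E t c r → CopWin E (t + p) c r := by
  intro t c r h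
  induction h with
  | capture h => exact CopWin.capture ((hper _ _ _).mpr h)
  | step c' hc _ ih =>
    refine CopWin.step c' ((hper _ _ _).mpr hc) (fun r' hr' => ?_)
    have := ih r' ((hper _ _ _).mp hr')
    simpa [Nat.add_right_comm] using this

private lemma star_down {V : Type*} {E : ℕ → V → V → Prop}
    (hrefl : ∀ (t : ℕ) (u : V), E t u u) {u : V} {s : ℕ}
    (h : ∀ v, CopWin E (s + 1) u v) : ∀ v, CopWin E s u v := by
  intro v
  exact CopWin.step u (hrefl s u) (fun r' hr' => h r')

/-- In a reflexive periodic temporal graph, if `(t,u)` is a star of some augmented arena,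
then `(j,u)` is a star of the maximum augmented arena for every `0 ≤ j < p`. -/
theorem reflexive_star_at_all_times {V : Type*} [Fintype V]
    (p : ℕ) (hp : 0 < p) (E : ℕ → V → V → Prop)
    (hper : Periodic p E)
    (hrefl : ∀ (t : ℕ) (u : V), E t u u)
    (A : ℕ → V → V → Prop) (hA : IsAugArena E A)
    (t : ℕ) (u : V) (hstar : IsStar A t u)
    (Astar : ℕ → V → V → Prop)
    (hAstar : IsAugArena E Astar)
    (hmax : ∀ B : ℕ → V → V → Prop, IsAugArena E B →
      ∀ (s : ℕ) (x y : V), B s x y → Astar s x y) :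
    ∀ j : ℕ, j < p → IsStar Astar j u := by
  intro j hj v
  -- the maximal augmented arena contains every copwin configuration
  have hB : IsAugArena E (fun s x y => CopWin E s x y) :=
    ⟨fun s x y h => CopWin.capture h, fun s x y h => h⟩
  apply hmax _ hB
  -- star of A at t gives CopWin at t against everyone
  have ht : ∀ v, CopWin E t u v := fun v => hA.2 t u v (hstar v)
  -- shift up by p
  have htp : ∀ v, CopWin E (t + p) u v := fun v => CopWin.shift hper (ht v)
  -- go down from t + p to any n ≤ t + p
  have hdown : ∀ k, ∀ v, CopWin E (t + p - k) u v := by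
    intro k
    induction k with
    | zero => simpa using htp
    | succ k ih =>
      rcases Nat.lt_or_ge k (t + p) with hk | hk
      · have : t + p - k = (t + p - (k + 1)) + 1 := by omega
        exact star_down hrefl (this ▸ ih)
      · have h1 : t + p - (k + 1) = t + p - k := by omega
        exact h1 ▸ ih
  have := hdown (t + p - j) v
  have hle : j ≤ t + p := le_trans (le_of_lt hj) (Nat.le_add_left p t)
  have hj' : t + p - (t + p - j) = j := by omega
  rwa [hj'] at this
end

section
/- k-cop closure property: the set of augmented k-arenas of an arena D is closed under union of hyperedge sets, and hence has a unique maximum element A^k_max. -/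
/-- The configuration `(t, C, r)` — the multiset `C` of cop positions, robber at `r`,
round `t`, cops moving first (each along an arena edge) — is winning for the cops. -/
inductive KCopWin {V : Type*} (E : ℕ → V → V → Prop) : ℕ → Multiset V → V → Prop where
  | capture : ∀ {t : ℕ} {C : Multiset V} {r : V} (C' : Multiset V),
      Multiset.Rel (E t) C C' → r ∈ C' → KCopWin E t C r
  | step : ∀ {t : ℕ} {C : Multiset V} {r : V} (C' : Multiset V),
      Multiset.Rel (E t) C C' →
      (∀ r' : V, E t r r' → KCopWin E (t + 1) C' r') → KCopWin E t C r

/-- The arena is `k`-copwin: from some initial multiset of `k` cop positions on slice `0`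
the cops win against every robber initial choice. -/
def KCopwinArena {V : Type*} (k : ℕ) (E : ℕ → V → V → Prop) : Prop :=
  ∃ C₀ : Multiset V, Multiset.card C₀ = k ∧ ∀ r₀ : V, r₀ ∈ C₀ ∨ KCopWin E 0 C₀ r₀

/-- `A` is an augmented `k`-arena of the arena of `E`: it contains all hyperedges of the
`k`-arena `D^k` (those `(t,X,y)` with `|X| = k` and some `x ∈ X` having an edge to `y`),
and all its hyperedges correspond to `k`-copwin configurations. -/
def IsAugKArena {V : Type*} (k : ℕ) (E : ℕ → V → V → Prop)
    (A : ℕ → Multiset V → V → Prop) : Prop :=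
  (∀ (t : ℕ) (X : Multiset V) (y : V),
      Multiset.card X = k → (∃ x ∈ X, E t x y) → A t X y) ∧
  (∀ (t : ℕ) (X : Multiset V) (y : V),
      A t X y → Multiset.card X = k ∧ KCopWin E t X y)


lemma rel_exists {V : Type*} {E : ℕ → V → V → Prop} (hplay : Playable E) (t : ℕ)
    (C : Multiset V) : ∃ C', Multiset.Rel (E t) C C' := by
  induction C using Multiset.induction with
  | empty => exact ⟨0, Multiset.Rel.zero⟩
  | cons a s ih =>
    obtain ⟨C', hC'⟩ := ih
    obtain ⟨b, hb⟩ := hplay t a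
    exact ⟨b ::ₘ C', Multiset.Rel.cons hb hC'⟩

lemma win_of_edge {V : Type*} {E : ℕ → V → V → Prop} (hplay : Playable E) {t : ℕ}
    {X : Multiset V} {y : V} (h : ∃ x ∈ X, E t x y) : KCopWin E t X y := by
  obtain ⟨x, hx, hxy⟩ := h
  obtain ⟨X', rfl⟩ := Multiset.exists_cons_of_mem hx
  obtain ⟨C', hC'⟩ := rel_exists hplay t X'
  exact KCopWin.capture (y ::ₘ C') (Multiset.Rel.cons hxy hC') (Multiset.mem_cons_self _ _)

/-- The set of augmented `k`-arenas of `D` is closed under union of hyperedge sets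
and hence has a unique maximum element `A^k_max`. -/
theorem augKArena_union_closed_and_max {V : Type*} [Fintype V]
    (k p : ℕ) (hk : 1 ≤ k) (hp : 0 < p) (E : ℕ → V → V → Prop)
    (hper : Periodic p E) (hplay : Playable E) :
    (∀ A B : ℕ → Multiset V → V → Prop, IsAugKArena k E A → IsAugKArena k E B →
      IsAugKArena k E (fun t X y => A t X y ∨ B t X y)) ∧
    (∃! M : ℕ → Multiset V → V → Prop, IsAugKArena k E M ∧
      ∀ A : ℕ → Multiset V → V → Prop, IsAugKArena k E A →
        ∀ (t : ℕ) (X : Multiset V) (y : V), A t X y → M t X y) := by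
  constructor
  · rintro A B ⟨hA1, hA2⟩ ⟨hB1, hB2⟩
    refine ⟨fun t X y hc he => Or.inl (hA1 t X y hc he), ?_⟩
    rintro t X y (h | h)
    · exact hA2 t X y h
    · exact hB2 t X y h
  · refine ⟨fun t X y => Multiset.card X = k ∧ KCopWin E t X y, ⟨⟨?_, ?_⟩, ?_⟩, ?_⟩
    · exact fun t X y hc he => ⟨hc, win_of_edge hplay he⟩
    · exact fun t X y h => h
    · exact fun A hA t X y h => hA.2 t X y h
    · rintro M ⟨hM, hMmax⟩
      funext t X y
      apply propext
      constructor
      · exact fun h => And.intro (hM.2 t X y h).1 (hM.2 t X y h).2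
      · exact fun h => hMmax (fun t X y => Multiset.card X = k ∧ KCopWin E t X y)
          ⟨fun t X y hc he => ⟨hc, win_of_edge hplay he⟩, fun t X y h => h⟩ t X y h
end

section
/- k-augmentation property: let A^k be an augmented k-arena of D, X = ⟨(t,x_1),…,(t,x_k)⟩ and Z = ⟨(t+1,z_1),…,(t+1,z_k)⟩ size-k multisets of temporal nodes, and (t,y) a temporal node. If there is a bijection f : X → Z with f(t,x_i) an out-neighbour of (t,x_i) in D for each i, and (t,y) is a shadow k-corner of Z (i.e. ([t+1]_p, y) ∉ Z and Γ_t(y,D) ⊆ Γ_{t+1}(Z, A^k)), then A^k together with the additional hyperedge (X,(t+1,y)) is again an augmented k-arena of D. -/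
/-- `k`-augmentation property: adding to an augmented `k`-arena the hyperedge
`(X,(t+1,y))`, where some out-neighbour pairing sends `X` to a multiset `Z` of which
`(t,y)` is a shadow `k`-corner, yields again an augmented `k`-arena. -/
theorem k_augmentation_property {V : Type*} [Fintype V]
    (k p : ℕ) (hk : 1 ≤ k) (hp : 0 < p) (E : ℕ → V → V → Prop)
    (hper : Periodic p E) (hplay : Playable E)
    (A : ℕ → Multiset V → V → Prop) (hA : IsAugKArena k E A)
    (t : ℕ) (X Z : Multiset V) (y : V)
    (hX : Multiset.card X = k) (hZ : Multiset.card Z = k)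
    (hrel : Multiset.Rel (fun a b => E t a b) X Z)
    (hy : y ∉ Z)
    (hcorner : ∀ w : V, E t y w → A (t + 1) Z w) :
    IsAugKArena k E (fun s W v => A s W v ∨ (s = t ∧ W = X ∧ v = y)) := by
  obtain ⟨hA1, hA2⟩ := hA
  constructor
  · intro s W v hcard hex
    exact Or.inl (hA1 s W v hcard hex)
  · rintro s W v (h | ⟨rfl, rfl, rfl⟩)
    · exact hA2 s W v h
    · refine ⟨hX, KCopWin.step Z hrel ?_⟩
      intro r' hr'
      exact (hA2 (s + 1) Z r' (hcorner r' hr')).2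
end

section
/- k-maximality property: an augmented k-arena A^k of D equals A^k_max if and only if for every non-hyperedge (X,(t+1,y)) ∉ E(A^k), with X a size-k multiset over slice t, there is no size-k multiset Z over slice t+1 such that (1) some bijection f : X → Z sends each element to one of its out-neighbours in D, and (2) (t,y) is a shadow k-corner of Z in A^k. -/
lemma exists_rel_of_playable' {V : Type*} {r : V → V → Prop}
    (h : ∀ u, ∃ v, r u v) (X : Multiset V) :
    ∃ Y, Multiset.Rel r X Y := by
  induction X using Multiset.induction with
  | empty => exact ⟨0, Multiset.Rel.zero⟩
  | cons a s ih =>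
    obtain ⟨Y, hY⟩ := ih
    obtain ⟨v, hv⟩ := h a
    exact ⟨v ::ₘ Y, Multiset.Rel.cons hv hY⟩

lemma exists_mem_of_rel_right' {V : Type*} {r : V → V → Prop}
    {X Y : Multiset V} (h : Multiset.Rel r X Y) {y : V} (hy : y ∈ Y) :
    ∃ x ∈ X, r x y := by
  induction h with
  | zero => simp at hy
  | @cons a b s t hab h ih =>
    rcases Multiset.mem_cons.1 hy with rfl | hy'
    · exact ⟨a, Multiset.mem_cons_self _ _, hab⟩
    · obtain ⟨x, hx, hrx⟩ := ih hy'
      exact ⟨x, Multiset.mem_cons_of_mem hx, hrx⟩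

lemma kcopwin_of_edge' {V : Type*} {E : ℕ → V → V → Prop} (hplay : Playable E)
    {t : ℕ} {X : Multiset V} {y x : V} (hx : x ∈ X) (hxy : E t x y) :
    KCopWin E t X y := by
  obtain ⟨X', rfl⟩ := Multiset.exists_cons_of_mem hx
  obtain ⟨Y, hY⟩ := exists_rel_of_playable' (fun u => hplay t u) X'
  exact KCopWin.capture (y ::ₘ Y) (Multiset.Rel.cons hxy hY) (Multiset.mem_cons_self _ _)

/-- `k`-maximality property: an augmented `k`-arena `A` equals `A^k_max` iff no
non-hyperedge of `A` is justified by a shadow `k`-corner. -/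
theorem k_maximality_property {V : Type*} [Fintype V]
    (k p : ℕ) (hk : 1 ≤ k) (hp : 0 < p) (E : ℕ → V → V → Prop)
    (hper : Periodic p E) (hplay : Playable E)
    (Amax : ℕ → Multiset V → V → Prop)
    (hAmax : IsAugKArena k E Amax)
    (hmax : ∀ B : ℕ → Multiset V → V → Prop, IsAugKArena k E B →
      ∀ (t : ℕ) (X : Multiset V) (y : V), B t X y → Amax t X y)
    (A : ℕ → Multiset V → V → Prop) (hA : IsAugKArena k E A) :
    (∀ (t : ℕ) (X : Multiset V) (y : V), A t X y ↔ Amax t X y) ↔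
      (∀ (t : ℕ) (X : Multiset V) (y : V), Multiset.card X = k → ¬ A t X y →
        ¬ ∃ Z : Multiset V, Multiset.Rel (fun a b => E t a b) X Z ∧ y ∉ Z ∧
          ∀ w : V, E t y w → A (t + 1) Z w) := by
  obtain ⟨hAmax1, hAmax2⟩ := hAmax
  obtain ⟨hA1, hA2⟩ := hA
  set C : ℕ → Multiset V → V → Prop :=
    fun t X y => Multiset.card X = k ∧ KCopWin E t X y with hCdef
  have hC : IsAugKArena k E C := by
    constructor
    · rintro t X y hcard ⟨x, hx, hxy⟩
      exact ⟨hcard, kcopwin_of_edge' hplay hx hxy⟩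
    · rintro t X y ⟨h1, h2⟩; exact ⟨h1, h2⟩
  have hCmax := hmax C hC
  constructor
  · rintro hEq t X y hcard hnA ⟨Z, hrel, hyZ, hw⟩
    have hwin : KCopWin E t X y :=
      KCopWin.step Z hrel (fun r' hr' => (hA2 _ _ _ (hw r' hr')).2)
    exact hnA ((hEq t X y).2 (hCmax t X y ⟨hcard, hwin⟩))
  · intro hcond t X y
    constructor
    · exact hmax A ⟨hA1, hA2⟩ t X y
    · intro hAm
      obtain ⟨hcard, hwin⟩ := hAmax2 _ _ _ hAm
      clear hAm
      revert hcard
      induction hwin with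
      | @capture t X y C' hrel hmem =>
        intro hcard
        obtain ⟨x, hx, hxy⟩ := exists_mem_of_rel_right' hrel hmem
        exact hA1 _ _ _ hcard ⟨x, hx, hxy⟩
      | @step t X y C' hrel hnext ih =>
        intro hcard
        by_contra hnA
        have hcard' : Multiset.card C' = k := by
          rw [← Multiset.card_eq_card_of_rel hrel]; exact hcard
        by_cases hy : y ∈ C'
        · obtain ⟨x, hx, hxy⟩ := exists_mem_of_rel_right' hrel hy
          exact hnA (hA1 _ _ _ hcard ⟨x, hx, hxy⟩)
        · exact hcond _ _ _ hcard hnA ⟨C', hrel, hy, fun w hw => ih w hw hcard'⟩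
end

section
/- Any iterative augmentation procedure that starts from A_0 = D and at each step adds one edge justified by the Augmentation Property (an edge ((t,x),(t+1,y)) such that some z ∈ Γ_t(x,D) has (t,y) as a shadow corner of (t+1,z) in the current arena) terminates after at most |E(A*)| − |E(D)| steps, and every arena produced along the way is an augmented arena of D contained in A*. -/
/-- The configuration `(t, c, r)` of the restless single-cop pursuit game on the arena of
a periodic temporal graph (time taken modulo the period) is winning for the cop. -/
inductive CopWinP {V : Type*} {p : ℕ} (E : ZMod p → V → V → Prop) :
    ZMod p → V → V → Prop where
  | capture : ∀ {t : ZMod p} {c r : V}, E t c r → CopWinP E t c r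
  | step : ∀ {t : ZMod p} {c r : V} (c' : V), E t c c' →
      (∀ r' : V, E t r r' → CopWinP E (t + 1) c' r') → CopWinP E t c r

/-- `A` is an augmented arena of the arena of `E`. -/
def IsAugArenaP {V : Type*} {p : ℕ} (E A : ZMod p → V → V → Prop) : Prop :=
  (∀ (t : ZMod p) (u v : V), E t u v → A t u v) ∧
  (∀ (t : ZMod p) (u v : V), A t u v → CopWinP E t u v)

/-- The edge set of an arena. -/
def arenaEdges {V : Type*} {p : ℕ} (A : ZMod p → V → V → Prop) : Set (ZMod p × V × V) :=
  {e | A e.1 e.2.1 e.2.2}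

/-- One iteration of the augmentation procedure: add a single new edge `((t,x),(t+1,y))`
justified by the Augmentation Property, i.e. such that some `z ∈ Γ_t(x,D)` has `(t,y)`
as a shadow corner of `(t+1,z)` in the current arena. -/
def AugStep {V : Type*} {p : ℕ} (E B B' : ZMod p → V → V → Prop) : Prop :=
  ∃ (t : ZMod p) (x y : V),
    ¬ B t x y ∧
    (∃ z : V, E t x z ∧ y ≠ z ∧ ∀ w : V, E t y w → B (t + 1) z w) ∧
    (∀ (s : ZMod p) (u v : V), B' s u v ↔ (B s u v ∨ (s = t ∧ u = x ∧ v = y)))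

/-- Any iterative augmentation procedure starting from `D` and adding one justified edge
per step terminates after at most `|E(A*)| − |E(D)|` steps, and every arena produced
along the way is an augmented arena of `D` contained in `A*`. -/
theorem augmentation_procedure_terminates {V : Type*} [Fintype V]
    {p : ℕ} [NeZero p] (E : ZMod p → V → V → Prop)
    (hplay : ∀ (t : ZMod p) (u : V), ∃ v : V, E t u v)
    (Astar : ZMod p → V → V → Prop)
    (hAstar : IsAugArenaP E Astar)
    (hmax : ∀ B : ZMod p → V → V → Prop, IsAugArenaP E B →
      ∀ (t : ZMod p) (u v : V), B t u v → Astar t u v)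
    (A : ℕ → (ZMod p → V → V → Prop)) (N : ℕ)
    (hA0 : A 0 = E)
    (hstep : ∀ i : ℕ, i < N → AugStep E (A i) (A (i + 1))) :
    N ≤ (arenaEdges Astar).ncard - (arenaEdges E).ncard ∧
    ∀ i : ℕ, i ≤ N → IsAugArenaP E (A i) ∧
      ∀ (t : ZMod p) (u v : V), A i t u v → Astar t u v := by
  classical
  have haux : ∀ i, i ≤ N → IsAugArenaP E (A i) ∧
      ∀ (t : ZMod p) (u v : V), A i t u v → Astar t u v := by
    intro i
    induction i with
    | zero =>
      intro _
      subst hA0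
      exact ⟨⟨fun t u v h => h, fun t u v h => CopWinP.capture h⟩,
        fun t u v h => hAstar.1 t u v h⟩
    | succ n ih =>
      intro hn
      have hn' := Nat.lt_of_succ_le hn
      obtain ⟨hAug, hsub⟩ := ih hn'.le
      obtain ⟨t, x, y, hnot, ⟨z, hxz, hyz, hw⟩, hiff⟩ := hstep n hn'
      have hAug' : IsAugArenaP E (A (n + 1)) := by
        constructor
        · intro s u v h; rw [hiff]; exact Or.inl (hAug.1 s u v h)
        · intro s u v h
          rw [hiff] at h
          rcases h with h | ⟨rfl, rfl, rfl⟩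
          · exact hAug.2 s u v h
          · exact CopWinP.step z hxz (fun r' hr' => hAug.2 _ _ _ (hw r' hr'))
      exact ⟨hAug', fun s u v h => hmax _ hAug' s u v h⟩
  refine ⟨?_, haux⟩
  have hcard : ∀ i, i ≤ N → (arenaEdges E).ncard + i ≤ (arenaEdges (A i)).ncard := by
    intro i
    induction i with
    | zero => intro _; simp [hA0]
    | succ n ih =>
      intro hn
      have hn' := Nat.lt_of_succ_le hn
      have h1 := ih hn'.le
      obtain ⟨t, x, y, hnot, _, hiff⟩ := hstep n hn'
      have heq : arenaEdges (A (n + 1)) = insert (t, x, y) (arenaEdges (A n)) := by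
        ext ⟨s, u, v⟩
        simp only [arenaEdges, Set.mem_insert_iff, Set.mem_setOf_eq, hiff, Prod.mk.injEq]
        tauto
      have hnm : (t, x, y) ∉ arenaEdges (A n) := hnot
      have := Set.ncard_insert_of_notMem hnm (Set.toFinite _)
      rw [heq, this]
      omega
  have h1 := hcard N le_rfl
  have h2 : (arenaEdges (A N)).ncard ≤ (arenaEdges Astar).ncard := by
    apply Set.ncard_le_ncard _ (Set.toFinite _)
    rintro ⟨s, u, v⟩ h
    exact (haux N le_rfl).2 s u v h
  omega
end
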